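/- arXiv:2410.05353 — 2 statements merged into one kernel-verified Lean document; each statement's English description precedes it below -/
import Mathlib

section
/- Let A and B be types and let F : (ℕ → A) → (ℕ → B) be a causal function. Then F is computed by some stateful morphism sequence: there exist a sequence of state types S : ℕ → Type, an initial state s₀ ∈ S(0), and transition functions f_k : S(k) × A → S(k+1) × B such that for every input stream x : ℕ → A, the output stream y defined recursively by s(0) = s₀ and (s(k+1), y(k)) = f_k(s(k), x(k)) equals F(x). (Together with the converse, this yields the bijection between stateful morphism sequences in St(Set)([A],[B]) and causal functions Aℕ → Bℕ.) -/
/-- The states of a stateful morphism sequence run on an input stream: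
`s 0 = s₀` and `s (k+1)` is the first component of `f k (s k, x k)`. -/
def runStates {A B : Type} {S : ℕ → Type} (s₀ : S 0)
    (f : ∀ k, S k × A → S (k + 1) × B) (x : ℕ → A) : ∀ k, S k
  | 0 => s₀
  | k + 1 => (f k (runStates s₀ f x k, x k)).1

/-- The output stream of a stateful morphism sequence run on an input stream:
`y k` is the second component of `f k (s k, x k)`. -/
def runOutput {A B : Type} {S : ℕ → Type} (s₀ : S 0)
    (f : ∀ k, S k × A → S (k + 1) × B) (x : ℕ → A) (k : ℕ) : B :=
  (f k (runStates s₀ f x k, x k)).2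

/-- Extend a finite history to a full stream by repeating the last value. -/
def extStream {A : Type} (k : ℕ) (h : Fin (k + 1) → A) : ℕ → A :=
  fun n => if hn : n < k + 1 then h ⟨n, hn⟩ else h ⟨k, Nat.lt_succ_self k⟩

/-- Every causal function `F : (ℕ → A) → (ℕ → B)` is computed by a stateful
morphism sequence: there are state types `S k`, an initial state `s₀ : S 0` and
transitions `f k : S k × A → S (k+1) × B` whose run on any input stream `x`
produces exactly the output stream `F x`.  (Together with the converse this gives
the bijection between stateful morphism sequences in `St(Set)([A],[B])` and causal
functions `Aℕ → Bℕ`.) -/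
theorem causal_is_stateful (A B : Type) (F : (ℕ → A) → (ℕ → B))
    (hF : ∀ (x y : ℕ → A) (n : ℕ), (∀ m ≤ n, x m = y m) →
      ∀ m ≤ n, F x m = F y m) :
    ∃ (S : ℕ → Type) (s₀ : S 0) (f : ∀ k, S k × A → S (k + 1) × B),
      ∀ (x : ℕ → A) (k : ℕ), runOutput s₀ f x k = F x k := by
  refine ⟨fun k => Fin k → A, fun i => i.elim0, fun k p =>
    (fun i => if hi : (i : ℕ) < k then p.1 ⟨i, hi⟩ else p.2,
     F (extStream k (fun i => if hi : (i : ℕ) < k then p.1 ⟨i, hi⟩ else p.2)) k), ?_⟩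
  intro x k
  have hrun : ∀ j, runStates (S := fun k => Fin k → A)
      (fun i => i.elim0)
      (fun k p => (fun i => if hi : (i : ℕ) < k then p.1 ⟨i, hi⟩ else p.2,
        F (extStream k (fun i => if hi : (i : ℕ) < k then p.1 ⟨i, hi⟩ else p.2)) k))
      x j = fun i : Fin j => x i := by
    intro j
    induction j with
    | zero => funext i; exact i.elim0
    | succ j ih =>
      funext i
      simp only [runStates, ih]
      by_cases hi : (i : ℕ) < j
      · simp [hi]
      · have : (i : ℕ) = j := Nat.le_antisymm (Nat.lt_succ_iff.mp i.isLt) (Nat.le_of_not_lt hi)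
        simp [hi, this]
  simp only [runOutput, hrun]
  apply hF _ _ k _ k le_rfl
  intro m hm
  have hm' : m < k + 1 := Nat.lt_succ_of_le hm
  simp only [extStream, hm', dif_pos]
  by_cases h : m < k
  · simp [h]
  · have : m = k := Nat.le_antisymm hm (Nat.le_of_not_lt h)
    simp [h, this]
end

section
/- Let V and E be finite types with source and target maps src, tgt : E → V (a finite directed multigraph), and work in the commutative min-plus semiring R = ℕ ∪ {∞} with addition ⊕ = min (identity ∞) and multiplication ⊗ = + (identity 0). Consider the polynomial span with argument set X = (V + E) + (V + E), input set W = V + (V + E), message set Y = V + E, output set Z = V, where i : X → W maps inl(inl v) ↦ inl v, inl(inr e) ↦ inl(src e), inr t ↦ inr t; p : X → Y collapses the two copies of V + E; and o : Y → Z maps inl v ↦ v and inr e ↦ tgt e. Then for all d, b : V → R and w : E → R, the associated integral transform o_⊕ ∘ p_⊗ ∘ i* applied to the input function (d, b, w) : W → R satisfies, at every node u ∈ V: (o_⊕ ∘ p_⊗ ∘ i*)(d, b, w)(u) = min( d(u) + b(u), min_{e ∈ E, tgt(e) = u} (d(src e) + w(e)) ). In particular, when b ≡ 0 this is exactly one step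 of the Bellman–Ford update d_u ← min(d_u, min_{v ∈ N_u}(d_v + w_{v,u})). -/
/-- Pullback step of an integral transform: `i*(a) = a ∘ i`. -/
def pullbackStep {X W : Type} (i : X → W) (a : W → ℕ∞) : X → ℕ∞ :=
  fun x => a (i x)

/-- Argument pushforward of an integral transform over the min-plus semiring
`ℕ ∪ {∞}`: `p_⊗(c)(y) = ⊗_{x ∈ p⁻¹ y} c x`, where `⊗ = +` (empty product `= 0`). -/
def argPushforward {X Y : Type} [Fintype X] [DecidableEq Y]
    (p : X → Y) (c : X → ℕ∞) : Y → ℕ∞ :=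
  fun y => ∑ x ∈ Finset.univ.filter (fun x => p x = y), c x

/-- Message pushforward of an integral transform over the min-plus semiring
`ℕ ∪ {∞}`: `o_⊕(m)(z) = ⊕_{y ∈ o⁻¹ z} m y`, where `⊕ = min` (empty minimum `= ∞`). -/
noncomputable def msgPushforward {Y Z : Type} [Fintype Y] [DecidableEq Z]
    (o : Y → Z) (m : Y → ℕ∞) : Z → ℕ∞ :=
  fun z => (Finset.univ.filter (fun y => o y = z)).inf m

lemma argPushforward_elim_id {Y : Type} [Fintype Y] [DecidableEq Y]
    (c : (Y ⊕ Y) → ℕ∞) (y : Y) :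
    argPushforward (Sum.elim (id : Y → Y) (id : Y → Y)) c y
      = c (Sum.inl y) + c (Sum.inr y) := by
  unfold argPushforward
  have h : Finset.univ.filter (fun x : Y ⊕ Y => Sum.elim id id x = y)
      = {Sum.inl y, Sum.inr y} := by
    ext x
    cases x <;> simp [eq_comm]
  rw [h, Finset.sum_pair (by simp)]

/-- One step of the Bellman–Ford algorithm as an integral transform over the
tropical min-plus semiring `R = ℕ ∪ {∞}` (`⊕ = min`, `⊗ = +`).  For the polynomial
span with argument set `X = (V + E) + (V + E)`, input set `W = V + (V + E)`,
message set `Y = V + E`, output set `Z = V`, where `i` maps `inl (inl v) ↦ inl v`,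
`inl (inr e) ↦ inl (src e)`, and is the identity on the second copy of `V + E`;
`p` collapses the two copies of `V + E`; and `o` is the identity on `V` and the
target map on `E` — the integral transform `o_⊕ ∘ p_⊗ ∘ i*` applied to the data
`(d, b, w)` computes, at every node `u`,
`min (d u + b u) (min_{e : tgt e = u} (d (src e) + w e))`, which for `b ≡ 0` is
exactly the Bellman–Ford update. -/
theorem bellmanFord_integral_transform
    (V E : Type) [Fintype V] [Fintype E] [DecidableEq V] [DecidableEq E]
    (src tgt : E → V) (d b : V → ℕ∞) (w : E → ℕ∞) :
    ∀ u : V,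
      msgPushforward (Sum.elim (id : V → V) tgt)
        (argPushforward (Sum.elim (id : V ⊕ E → V ⊕ E) (id : V ⊕ E → V ⊕ E))
          (pullbackStep
            (Sum.elim
              (Sum.elim (fun v : V => (Sum.inl v : V ⊕ (V ⊕ E)))
                (fun e : E => (Sum.inl (src e) : V ⊕ (V ⊕ E))))
              (fun t : V ⊕ E => (Sum.inr t : V ⊕ (V ⊕ E))))
            (Sum.elim d (Sum.elim b w))))
        u
      =
      min (d u + b u)
        ((Finset.univ.filter (fun e : E => tgt e = u)).inf
          (fun e => d (src e) + w e)) := by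
  intro u
  unfold msgPushforward
  have hfilter : Finset.univ.filter (fun y : V ⊕ E => Sum.elim id tgt y = u)
      = insert (Sum.inl u)
          ((Finset.univ.filter (fun e : E => tgt e = u)).image Sum.inr) := by
    ext y
    cases y <;> simp [eq_comm]
  rw [hfilter, Finset.inf_insert, Finset.inf_image]
  congr 1
  · rw [argPushforward_elim_id]
    simp [pullbackStep]
  · apply Finset.inf_congr rfl
    intro e _
    rw [Function.comp_apply, argPushforward_elim_id]
    simp [pullbackStep]
end
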